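/- Let w be the cyclic DFS walk on the plane rooted tree T_0 (obtained from a tree T with a unital arrowflow, satisfying 'ascending children precede descending children'), and let Ω be the cyclically ordered set of in-indices. Then in-indices and forward steps interlace: between any two cyclically consecutive in-indices u and v there is exactly one forward step in the subwalk w_u w_{u+1} … w_v; moreover every step before the forward step in this subwalk is upward-backward and every step after it is downward-backward. -/

import Mathlib

/-!
At an occurrence `w_k = i`, the walk has so far entered exactly the subtrees of an initial
segment of the children of `i`, in plane order. As ascending children come first, `k` is an
in-index as soon as `w_k` is not entered from a descending child and not left towards an
ascending one. For an occurrence of the root one of the two always fails, because both root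
edges are oriented alike.
Likewise, an upward step from a child `x` followed by a downward step to a child `z` means that
`x` precedes `z`, so an upward-backward step is never followed by a downward-backward one.

Hence between consecutive in-indices `u` and `v` every position is entered by an
upward-backward step or left by a downward-backward one. The first step after `u` that is not
upward-backward cannot be downward-backward, so it is forward, and from then on every step up
to `v` is downward-backward.
-/

/-- A plane rooted tree: a root label together with an ordered list of subtrees. -/
inductive PTree (V : Type) : Type
  | node : V → List (PTree V) → PTree V

namespace PTree

variable {V : Type}

/-- The root label of a plane rooted tree. -/
def root : PTree V → V
  | node v _ => v

/-- The depth-first-search walk: `dfs (node v [t₁,…,tₘ]) = v dfs(t₁) v … v dfs(tₘ) v`. -/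
def dfs : PTree V → List V
  | node v ts => v :: (ts.attach.map (fun t => dfs t.1 ++ [v])).flatten
decreasing_by simp only [PTree.node.sizeOf_spec]; have := List.sizeOf_lt_of_mem t.2; omega

/-- The list of vertex labels of a plane rooted tree. -/
def verts : PTree V → List V
  | node v ts => v :: (ts.attach.map (fun t => verts t.1)).flatten
decreasing_by simp only [PTree.node.sizeOf_spec]; have := List.sizeOf_lt_of_mem t.2; omega

/-- The downward arcs (from each vertex to each of its children). -/
def downArcs : PTree V → List (V × V)
  | node v ts => (ts.map fun t => (v, root t)) ++ (ts.attach.map (fun t => downArcs t.1)).flatten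
decreasing_by simp only [PTree.node.sizeOf_spec]; have := List.sizeOf_lt_of_mem t.2; omega

/-- `AscFirst A0 t` : at every vertex, ascending children precede descending children. -/
def AscFirst (A0 : Set (V × V)) : PTree V → Prop
  | node v ts => ts.Pairwise (fun t₁ t₂ => (root t₂, v) ∈ A0 → (root t₁, v) ∈ A0) ∧
      ∀ t ∈ ts.attach, AscFirst A0 t.1
decreasing_by simp only [PTree.node.sizeOf_spec]; have := List.sizeOf_lt_of_mem t.2; omega

/-- The period of the cyclic DFS walk (`2n` for a tree with `n` edges). -/
def cyclen (t : PTree V) : ℕ := (dfs t).length - 1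

/-- The cyclic DFS walk, as a function of an index taken modulo `cyclen t`. -/
def cyc (t : PTree V) (k : ℕ) : Option V := (dfs t)[k % cyclen t]?

/-- The step at (cyclic) position `p` is forward, i.e. its arc lies in `A0`. -/
def ForwardAt (t : PTree V) (A0 : Set (V × V)) (p : ℕ) : Prop :=
  ∃ x y, cyc t p = some x ∧ cyc t (p + 1) = some y ∧ (x, y) ∈ A0

/-- The step at (cyclic) position `p` is upward-backward. -/
def UpBackAt (t : PTree V) (A0 : Set (V × V)) (p : ℕ) : Prop :=
  ∃ x y, cyc t p = some x ∧ cyc t (p + 1) = some y ∧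
    (y, x) ∈ downArcs t ∧ (x, y) ∉ A0

/-- The step at (cyclic) position `p` is downward-backward. -/
def DownBackAt (t : PTree V) (A0 : Set (V × V)) (p : ℕ) : Prop :=
  ∃ x y, cyc t p = some x ∧ cyc t (p + 1) = some y ∧
    (x, y) ∈ downArcs t ∧ (x, y) ∉ A0

/-- `InIndex t A0 i k` : `k` is the in-index of the vertex `i ≠ r` : `w k = i`, every
occurrence of an ascending child of `i` in the DFS walk is before `k`, and every
occurrence of a descending child of `i` is after `k`. -/
def InIndex (t : PTree V) (A0 : Set (V × V)) (i : V) (k : ℕ) : Prop :=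
  k < cyclen t ∧ (dfs t)[k]? = some i ∧ i ≠ root t ∧
    ∀ (l : ℕ) (c : V), (dfs t)[l]? = some c → (i, c) ∈ downArcs t →
      ((c, i) ∈ A0 → l < k) ∧ ((i, c) ∈ A0 → k < l)

theorem dfs_node (v : V) (ts : List (PTree V)) :
    dfs (node v ts) = v :: (ts.map fun t => dfs t ++ [v]).flatten := by
  rw [dfs, List.attach_map_val (f := fun t => dfs t ++ [v])]

theorem verts_node (v : V) (ts : List (PTree V)) :
    verts (node v ts) = v :: (ts.map verts).flatten := by
  rw [verts, List.attach_map_val (f := verts)]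

theorem downArcs_node (v : V) (ts : List (PTree V)) :
    downArcs (node v ts) = ts.map (fun t => (v, root t)) ++ (ts.map downArcs).flatten := by
  rw [downArcs, List.attach_map_val (f := downArcs)]

theorem root_node (v : V) (ts : List (PTree V)) : root (node v ts) = v := rfl

theorem dfs_node_nil (v : V) : dfs (node v []) = [v] := by
  simp [dfs_node]

theorem dfs_node_cons (v : V) (c : PTree V) (cs : List (PTree V)) :
    dfs (node v (c :: cs)) = v :: (dfs c ++ dfs (node v cs)) := by
  simp [dfs_node]

theorem downArcs_node_nil (v : V) : downArcs (node v []) = [] := by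
  simp [downArcs_node]

theorem mem_verts_node_cons {v x : V} {c : PTree V} {cs : List (PTree V)} :
    x ∈ verts (node v (c :: cs)) ↔ x ∈ verts c ∨ x ∈ verts (node v cs) := by
  simp only [verts_node, List.map_cons, List.flatten_cons, List.mem_cons, List.mem_append]
  tauto

theorem nodup_verts_node_cons {v : V} {c : PTree V} {cs : List (PTree V)} :
    (verts (node v (c :: cs))).Nodup ↔
      (verts c).Nodup ∧ (verts (node v cs)).Nodup ∧ (verts c).Disjoint (verts (node v cs)) := by
  simp only [verts_node, List.map_cons, List.flatten_cons, List.nodup_cons, List.nodup_append,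
    List.mem_append, not_or, List.Disjoint]
  grind

theorem mem_downArcs_node_cons {v : V} {c : PTree V} {cs : List (PTree V)} {e : V × V} :
    e ∈ downArcs (node v (c :: cs)) ↔
      e = (v, root c) ∨ e ∈ downArcs c ∨ e ∈ downArcs (node v cs) := by
  simp only [downArcs_node, List.map_cons, List.flatten_cons, List.cons_append, List.mem_cons,
    List.mem_append]
  tauto

theorem ascFirst_node (A0 : Set (V × V)) (v : V) (ts : List (PTree V)) :
    AscFirst A0 (node v ts) ↔
      ts.Pairwise (fun t₁ t₂ => (root t₂, v) ∈ A0 → (root t₁, v) ∈ A0) ∧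
        ∀ t ∈ ts, AscFirst A0 t := by
  rw [AscFirst]
  simp

theorem ascFirst_node_cons {A0 : Set (V × V)} {v : V} {c : PTree V} {cs : List (PTree V)} :
    AscFirst A0 (node v (c :: cs)) ↔ AscFirst A0 c ∧ AscFirst A0 (node v cs) ∧
      ∀ c' ∈ cs, (root c', v) ∈ A0 → (root c, v) ∈ A0 := by
  simp only [ascFirst_node, List.pairwise_cons, List.mem_cons, forall_eq_or_imp]
  tauto

@[elab_as_elim]
theorem cons_induction {motive : PTree V → Prop} (leaf : ∀ v, motive (node v []))
    (cons : ∀ v c cs, motive c → motive (node v cs) → motive (node v (c :: cs))) :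
    ∀ s, motive s
  | node v [] => leaf v
  | node v (c :: cs) => cons v c cs (cons_induction leaf cons c)
      (cons_induction leaf cons (node v cs))

theorem root_mem_verts (s : PTree V) : root s ∈ verts s := by
  cases s
  simp [verts_node, root]

theorem dfs_ne_nil (s : PTree V) : dfs s ≠ [] := by
  cases s
  simp [dfs_node]

theorem head?_dfs (s : PTree V) : (dfs s).head? = some (root s) := by
  cases s
  simp [dfs_node, root]

theorem getLast?_dfs (s : PTree V) : (dfs s).getLast? = some (root s) := by
  induction s using cons_induction with
  | leaf v => simp [dfs_node_nil, root]
  | cons v c cs _ ihs =>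
    rw [dfs_node_cons, ← List.cons_append, List.getLast?_append_of_ne_nil _ (dfs_ne_nil _), ihs]
    rfl

theorem length_dfs (t : PTree V) : (dfs t).length = cyclen t + 1 := by
  have := List.length_pos_iff.2 (dfs_ne_nil t)
  rw [cyclen]
  omega

theorem getElem?_dfs_zero (t : PTree V) : (dfs t)[0]? = some (root t) := by
  rw [← List.head?_eq_getElem?, head?_dfs]

theorem getElem?_dfs_cyclen (t : PTree V) : (dfs t)[cyclen t]? = some (root t) := by
  rw [cyclen, ← List.getLast?_eq_getElem?, getLast?_dfs]

theorem cyclen_node_cons_pos (v : V) (c : PTree V) (cs : List (PTree V)) :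
    0 < cyclen (node v (c :: cs)) := by
  have := List.length_pos_iff.2 (dfs_ne_nil c)
  simp only [cyclen, dfs_node_cons, List.length_cons, List.length_append]
  omega

theorem mem_verts_of_mem_dfs {x : V} (s : PTree V) (h : x ∈ dfs s) : x ∈ verts s := by
  induction s using cons_induction with
  | leaf v => simp_all [dfs_node_nil, verts_node]
  | cons v c cs ihc ihs =>
    rw [dfs_node_cons, List.mem_cons, List.mem_append] at h
    rw [mem_verts_node_cons]
    rcases h with rfl | h | h
    · exact Or.inr (root_mem_verts _)
    · exact Or.inl (ihc h)
    · exact Or.inr (ihs h)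

theorem mem_verts_of_mem_downArcs {x y : V} (s : PTree V) (h : (x, y) ∈ downArcs s) :
    x ∈ verts s ∧ y ∈ verts s := by
  induction s using cons_induction with
  | leaf v => simp [downArcs_node_nil] at h
  | cons v c cs ihc ihs =>
    simp only [mem_verts_node_cons]
    rcases mem_downArcs_node_cons.1 h with h | h | h
    · obtain ⟨rfl, rfl⟩ := Prod.mk.inj h
      exact ⟨Or.inr (root_mem_verts _), Or.inl (root_mem_verts c)⟩
    · exact ⟨Or.inl (ihc h).1, Or.inl (ihc h).2⟩
    · exact ⟨Or.inr (ihs h).1, Or.inr (ihs h).2⟩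

theorem snd_ne_root_of_mem_downArcs {x y : V} {s : PTree V} (hnd : (verts s).Nodup)
    (h : (x, y) ∈ downArcs s) : y ≠ root s := by
  induction s using cons_induction generalizing x with
  | leaf v => simp [downArcs_node_nil] at h
  | cons v c cs ihc ihs =>
    obtain ⟨-, hnds, hdisj⟩ := nodup_verts_node_cons.1 hnd
    have hv : v ∈ verts (node v cs) := root_mem_verts _
    rintro (rfl : y = v)
    rcases mem_downArcs_node_cons.1 h with h | h | h
    · exact hdisj (root_mem_verts c) ((Prod.mk.inj h).2 ▸ hv)
    · exact hdisj (mem_verts_of_mem_downArcs c h).2 hv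
    · exact ihs hnds h rfl

theorem not_mem_downArcs_swap {x y : V} {s : PTree V} (hnd : (verts s).Nodup)
    (h : (x, y) ∈ downArcs s) : (y, x) ∉ downArcs s := by
  induction s using cons_induction with
  | leaf v => simp [downArcs_node_nil] at h
  | cons v c cs ihc ihs =>
    obtain ⟨hndc, hnds, hdisj⟩ := nodup_verts_node_cons.1 hnd
    have hv : v ∈ verts (node v cs) := root_mem_verts _
    intro h'
    rcases mem_downArcs_node_cons.1 h with he | hc | hs
    · obtain ⟨rfl, rfl⟩ := Prod.mk.inj he
      exact snd_ne_root_of_mem_downArcs hnd h' rfl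
    · have hxy := mem_verts_of_mem_downArcs c hc
      rcases mem_downArcs_node_cons.1 h' with he | hc' | hs'
      · exact hdisj hxy.2 ((Prod.mk.inj he).1 ▸ hv)
      · exact ihc hndc hc hc'
      · exact hdisj hxy.1 (mem_verts_of_mem_downArcs _ hs').2
    · have hxy := mem_verts_of_mem_downArcs _ hs
      rcases mem_downArcs_node_cons.1 h' with he | hc' | hs'
      · exact hdisj ((Prod.mk.inj he).2 ▸ root_mem_verts c) hxy.1
      · exact hdisj (mem_verts_of_mem_downArcs c hc').1 hxy.2
      · exact ihs hnds hs hs'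

theorem exists_eq_root_of_mem_downArcs_node {v y : V} {cs : List (PTree V)}
    (hnd : (verts (node v cs)).Nodup) (h : (v, y) ∈ downArcs (node v cs)) :
    ∃ c ∈ cs, y = root c := by
  rw [verts_node, List.nodup_cons, List.mem_flatten] at hnd
  simp only [downArcs_node, List.mem_append, List.mem_map, Prod.mk.injEq, true_and,
    List.mem_flatten] at h
  rcases h with ⟨c, hc, rfl⟩ | ⟨_, ⟨c, hc, rfl⟩, h⟩
  · exact ⟨c, hc, rfl⟩
  · exact (hnd.1 ⟨verts c, List.mem_map_of_mem hc, (mem_verts_of_mem_downArcs c h).1⟩).elim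

theorem isChain_dfs (s : PTree V) :
    (dfs s).IsChain (fun x y => (x, y) ∈ downArcs s ∨ (y, x) ∈ downArcs s) := by
  induction s using cons_induction with
  | leaf v => simp [dfs_node_nil]
  | cons v c cs ihc ihs =>
    have hsub {e : V × V} (h : e ∈ downArcs c ∨ e ∈ downArcs (node v cs)) :
        e ∈ downArcs (node v (c :: cs)) :=
      mem_downArcs_node_cons.2 (Or.inr h)
    have hroot : (v, root c) ∈ downArcs (node v (c :: cs)) :=
      mem_downArcs_node_cons.2 (Or.inl rfl)
    rw [dfs_node_cons, ← List.cons_append, List.isChain_append, List.isChain_cons, head?_dfs,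
      List.getLast?_cons, getLast?_dfs, head?_dfs]
    refine ⟨⟨?_, ihc.imp ?_⟩, ihs.imp ?_, ?_⟩
    · simp [hroot]
    · exact fun x y h => h.imp (fun h => hsub (Or.inl h)) (fun h => hsub (Or.inl h))
    · exact fun x y h => h.imp (fun h => hsub (Or.inr h)) (fun h => hsub (Or.inr h))
    · simpa [root_node] using Or.inr hroot

theorem _root_.List.cons_append_eq_append_cons {α : Type*} {a i : α} {L₁ L₂ P S : List α}
    (h : a :: (L₁ ++ L₂) = P ++ i :: S) :
    (P = [] ∧ i = a ∧ S = L₁ ++ L₂) ∨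
      (∃ P' S', P = a :: P' ∧ S = S' ++ L₂ ∧ L₁ = P' ++ i :: S') ∨
      (∃ P', P = a :: (L₁ ++ P') ∧ L₂ = P' ++ i :: S) := by
  rcases P with _ | ⟨b, P'⟩
  · obtain ⟨rfl, rfl⟩ := List.cons.inj h
    exact Or.inl ⟨rfl, rfl, rfl⟩
  · rw [List.cons_append, List.cons.injEq] at h
    obtain ⟨rfl, h⟩ := h
    rcases List.append_eq_append_iff.1 h with ⟨as, rfl, rfl⟩ | ⟨_ | ⟨d, bs⟩, rfl, hbs⟩
    · exact Or.inr (Or.inr ⟨as, rfl, rfl⟩)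
    · exact Or.inr (Or.inr ⟨[], by simp, by simpa using hbs.symm⟩)
    · obtain ⟨rfl, rfl⟩ := List.cons.inj hbs
      exact Or.inr (Or.inl ⟨P', bs, rfl, rfl, rfl⟩)

theorem _root_.List.eq_take_append_cons_drop {α : Type*} {l : List α} {k : ℕ} {a : α}
    (h : l[k]? = some a) : l = l.take k ++ a :: l.drop (k + 1) := by
  obtain ⟨hk, rfl⟩ := List.getElem?_eq_some_iff.1 h
  rw [← List.drop_eq_getElem_cons hk, List.take_append_drop]

theorem _root_.List.mem_take_of_getElem? {α : Type*} {l : List α} {j k : ℕ} {a : α}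
    (h : l[j]? = some a) (hjk : j < k) : a ∈ l.take k :=
  List.mem_of_getElem? (by rwa [List.getElem?_take, if_pos hjk])

theorem _root_.List.mem_drop_of_getElem? {α : Type*} {l : List α} {j k : ℕ} {a : α}
    (h : l[j]? = some a) (hkj : k ≤ j) : a ∈ l.drop k :=
  List.mem_of_getElem? (by rwa [List.getElem?_drop, Nat.add_sub_cancel' hkj])

section Slots

variable {A0 : Set (V × V)} {v x y : V} {c : PTree V} {cs : List (PTree V)}

theorem mem_downArcs_of_fst_mem_verts (hdisj : (verts c).Disjoint (verts (node v cs)))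
    (h : (x, y) ∈ downArcs (node v (c :: cs))) (hx : x ∈ verts c) : (x, y) ∈ downArcs c := by
  rcases mem_downArcs_node_cons.1 h with he | hc | hs
  · exact (hdisj hx ((Prod.mk.inj he).1 ▸ root_mem_verts (node v cs))).elim
  · exact hc
  · exact (hdisj hx (mem_verts_of_mem_downArcs _ hs).1).elim

theorem mem_downArcs_of_snd_mem_verts (hdisj : (verts c).Disjoint (verts (node v cs)))
    (h : (x, y) ∈ downArcs (node v (c :: cs))) (hy : y ∈ verts (node v cs)) :
    (x, y) ∈ downArcs (node v cs) := by
  rcases mem_downArcs_node_cons.1 h with he | hc | hs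
  · exact (hdisj ((Prod.mk.inj he).2 ▸ root_mem_verts c) hy).elim
  · exact (hdisj (mem_verts_of_mem_downArcs c hc).2 hy).elim
  · exact hs

theorem eq_root_of_mem_downArcs_of_snd_mem_verts (hdisj : (verts c).Disjoint (verts (node v cs)))
    (h : (x, y) ∈ downArcs (node v (c :: cs))) (hx : x ∈ verts (node v cs))
    (hy : y ∈ verts c) : x = v ∧ y = root c := by
  rcases mem_downArcs_node_cons.1 h with he | hc | hs
  · exact Prod.mk.inj he
  · exact (hdisj (mem_verts_of_mem_downArcs c hc).1 hx).elim
  · exact (hdisj hy (mem_verts_of_mem_downArcs _ hs).2).elim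

theorem exists_head?_of_mem_suffix {s : PTree V} (hnd : (verts s).Nodup)
    (hasc : AscFirst A0 s) {P S : List V} {i b : V} (h : dfs s = P ++ i :: S)
    (hb : (i, b) ∈ downArcs s) (hbS : b ∈ S) :
    ∃ y ∈ S.head?, (i, y) ∈ downArcs s ∧ ((b, i) ∈ A0 → (y, i) ∈ A0) := by
  induction s using cons_induction generalizing P S i b with
  | leaf v => simp [downArcs_node_nil] at hb
  | cons v c cs ihc ihs =>
    obtain ⟨hndc, hnds, hdisj⟩ := nodup_verts_node_cons.1 hnd
    obtain ⟨hascc, hascs, hord⟩ := ascFirst_node_cons.1 hasc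
    rw [dfs_node_cons] at h
    rcases List.cons_append_eq_append_cons h with ⟨rfl, rfl, rfl⟩ | ⟨P', S', rfl, rfl, hc⟩ |
      ⟨P', rfl, hs⟩
    · refine ⟨root c, by simp [head?_dfs], mem_downArcs_node_cons.2 (Or.inl rfl), ?_⟩
      rcases mem_downArcs_node_cons.1 hb with he | hc | hs
      · rw [(Prod.mk.inj he).2]
        exact id
      · exact (hdisj (mem_verts_of_mem_downArcs c hc).1 (root_mem_verts _)).elim
      · obtain ⟨c', hc', rfl⟩ := exists_eq_root_of_mem_downArcs_node hnds hs
        exact hord c' hc'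
    · have hi : i ∈ verts c := mem_verts_of_mem_dfs c (by simp [hc])
      have hbc := mem_downArcs_of_fst_mem_verts hdisj hb hi
      have hbS' : b ∈ S' := by
        refine (List.mem_append.1 hbS).resolve_right fun hb' => ?_
        exact hdisj (mem_verts_of_mem_downArcs c hbc).2 (mem_verts_of_mem_dfs _ hb')
      obtain ⟨y, hy, hiy, hby⟩ := ihc hndc hascc hc hbc hbS'
      refine ⟨y, ?_, mem_downArcs_node_cons.2 (Or.inr (Or.inl hiy)), hby⟩
      simp [List.head?_append, Option.mem_def.1 hy]
    · have hbs := mem_downArcs_of_snd_mem_verts hdisj hb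
        (mem_verts_of_mem_dfs _ (by simp [hs, hbS]))
      obtain ⟨y, hy, hiy, hby⟩ := ihs hnds hascs hs hbs hbS
      exact ⟨y, hy, mem_downArcs_node_cons.2 (Or.inr (Or.inr hiy)), hby⟩

theorem exists_getLast?_of_mem_prefix {s : PTree V} (hnd : (verts s).Nodup)
    (hasc : AscFirst A0 s) {P S : List V} {i a : V} (h : dfs s = P ++ i :: S)
    (ha : (i, a) ∈ downArcs s) (haP : a ∈ P) :
    ∃ x ∈ P.getLast?, (i, x) ∈ downArcs s ∧ ((x, i) ∈ A0 → (a, i) ∈ A0) := by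
  induction s using cons_induction generalizing P S i a with
  | leaf v => simp [downArcs_node_nil] at ha
  | cons v c cs ihc ihs =>
    obtain ⟨hndc, hnds, hdisj⟩ := nodup_verts_node_cons.1 hnd
    obtain ⟨hascc, hascs, hord⟩ := ascFirst_node_cons.1 hasc
    have hroot : (v, root c) ∈ downArcs (node v (c :: cs)) :=
      mem_downArcs_node_cons.2 (Or.inl rfl)
    rw [dfs_node_cons] at h
    rcases List.cons_append_eq_append_cons h with ⟨rfl, -, -⟩ | ⟨P', S', rfl, rfl, hc⟩ |
      ⟨P', rfl, hs⟩
    · simp at haP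
    · have hi : i ∈ verts c := mem_verts_of_mem_dfs c (by simp [hc])
      have hac := mem_downArcs_of_fst_mem_verts hdisj ha hi
      have haP' : a ∈ P' := by
        refine (List.mem_cons.1 haP).resolve_left fun hav => ?_
        exact hdisj (hav ▸ (mem_verts_of_mem_downArcs c hac).2) (root_mem_verts _)
      obtain ⟨x, hx, hix, hax⟩ := ihc hndc hascc hc hac haP'
      refine ⟨x, ?_, mem_downArcs_node_cons.2 (Or.inr (Or.inl hix)), hax⟩
      simp [List.getLast?_cons, Option.mem_def.1 hx]
    · have hi : i ∈ verts (node v cs) := mem_verts_of_mem_dfs _ (by simp [hs])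
      rcases List.mem_cons.1 haP with rfl | haP
      · exact (snd_ne_root_of_mem_downArcs hnd ha rfl).elim
      rcases List.mem_append.1 haP with hac | haP'
      · obtain ⟨rfl, rfl⟩ := eq_root_of_mem_downArcs_of_snd_mem_verts hdisj ha hi
          (mem_verts_of_mem_dfs c hac)
        rcases P'.eq_nil_or_concat with rfl | ⟨L, x, rfl⟩
        · refine ⟨root c, ?_, hroot, id⟩
          simp [List.getLast?_cons, getLast?_dfs]
        · -- the walk of `node i cs` can only enter its root `i` from a child
          have hxv : (x, i) ∈ downArcs (node i cs) ∨ (i, x) ∈ downArcs (node i cs) := by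
            have := isChain_dfs (node i cs)
            rw [hs, List.isChain_append] at this
            exact this.2.2 x (by simp) i (by simp)
          have hix := hxv.resolve_left fun hxi => snd_ne_root_of_mem_downArcs hnds hxi rfl
          obtain ⟨c', hc', rfl⟩ := exists_eq_root_of_mem_downArcs_node hnds hix
          refine ⟨root c', ?_, mem_downArcs_node_cons.2 (Or.inr (Or.inr hix)), hord c' hc'⟩
          simp [List.getLast?_cons]
      · have has := mem_downArcs_of_snd_mem_verts hdisj ha
          (mem_verts_of_mem_dfs _ (by simp [hs, haP']))
        obtain ⟨x, hx, hix, hax⟩ := ihs hnds hascs hs has haP'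
        refine ⟨x, ?_, mem_downArcs_node_cons.2 (Or.inr (Or.inr hix)), hax⟩
        rw [← List.cons_append, List.getLast?_append_of_ne_nil _ (List.ne_nil_of_mem haP')]
        exact hx

theorem asc_of_mem_prefix_of_mem_suffix {s : PTree V} (hnd : (verts s).Nodup)
    (hasc : AscFirst A0 s) {P S : List V} {i a b : V} (h : dfs s = P ++ i :: S)
    (ha : (i, a) ∈ downArcs s) (hb : (i, b) ∈ downArcs s) (haP : a ∈ P) (hbS : b ∈ S)
    (hbi : (b, i) ∈ A0) : (a, i) ∈ A0 := by
  induction s using cons_induction generalizing P S i a b with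
  | leaf v => simp [downArcs_node_nil] at ha
  | cons v c cs ihc ihs =>
    obtain ⟨hndc, hnds, hdisj⟩ := nodup_verts_node_cons.1 hnd
    obtain ⟨hascc, hascs, hord⟩ := ascFirst_node_cons.1 hasc
    rw [dfs_node_cons] at h
    rcases List.cons_append_eq_append_cons h with ⟨rfl, -, -⟩ | ⟨P', S', rfl, rfl, hc⟩ |
      ⟨P', rfl, hs⟩
    · simp at haP
    · have hi : i ∈ verts c := mem_verts_of_mem_dfs c (by simp [hc])
      have hac := mem_downArcs_of_fst_mem_verts hdisj ha hi
      have hbc := mem_downArcs_of_fst_mem_verts hdisj hb hi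
      have haP' : a ∈ P' := by
        refine (List.mem_cons.1 haP).resolve_left fun hav => ?_
        exact hdisj (hav ▸ (mem_verts_of_mem_downArcs c hac).2) (root_mem_verts _)
      have hbS' : b ∈ S' := by
        refine (List.mem_append.1 hbS).resolve_right fun hb' => ?_
        exact hdisj (mem_verts_of_mem_downArcs c hbc).2 (mem_verts_of_mem_dfs _ hb')
      exact ihc hndc hascc hc hac hbc haP' hbS' hbi
    · have hi : i ∈ verts (node v cs) := mem_verts_of_mem_dfs _ (by simp [hs])
      have hbs := mem_downArcs_of_snd_mem_verts hdisj hb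
        (mem_verts_of_mem_dfs _ (by simp [hs, hbS]))
      rcases List.mem_cons.1 haP with rfl | haP
      · exact (snd_ne_root_of_mem_downArcs hnd ha rfl).elim
      rcases List.mem_append.1 haP with hac | haP'
      · obtain ⟨rfl, rfl⟩ := eq_root_of_mem_downArcs_of_snd_mem_verts hdisj ha hi
          (mem_verts_of_mem_dfs c hac)
        obtain ⟨c', hc', rfl⟩ := exists_eq_root_of_mem_downArcs_node hnds hbs
        exact hord c' hc' hbi
      · have has := mem_downArcs_of_snd_mem_verts hdisj ha
          (mem_verts_of_mem_dfs _ (by simp [hs, haP']))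
        exact ihs hnds hascs hs has hbs haP' hbS hbi

end Slots

def IsOrientation (A0 : Set (V × V)) (t : PTree V) : Prop :=
  ∀ i j : V, (i, j) ∈ downArcs t → ((i, j) ∈ A0 ↔ (j, i) ∉ A0)

section Walk

variable {A0 : Set (V × V)} {t : PTree V}

theorem IsOrientation.not_mem_swap (hor : IsOrientation A0 t) {i j : V}
    (h : (i, j) ∈ downArcs t) (hij : (i, j) ∈ A0) : (j, i) ∉ A0 :=
  (hor i j h).1 hij

theorem IsOrientation.mem_of_swap_not_mem (hor : IsOrientation A0 t) {i j : V}
    (h : (i, j) ∈ downArcs t) (hji : (j, i) ∉ A0) : (i, j) ∈ A0 :=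
  (hor i j h).2 hji

theorem IsOrientation.mem_swap (hor : IsOrientation A0 t) {i j : V}
    (h : (i, j) ∈ downArcs t) (hij : (i, j) ∉ A0) : (j, i) ∈ A0 :=
  not_not.1 (mt (hor i j h).2 hij)

theorem inIndex_of_asc_pred_of_desc_succ (hnd : (verts t).Nodup) (hasc : AscFirst A0 t)
    (hor : IsOrientation A0 t) {k : ℕ} {i : V} (hk : k + 1 < cyclen t)
    (hi : (dfs t)[k + 1]? = some i) (hr : i ≠ root t)
    (hpred : ∀ x, (dfs t)[k]? = some x → (i, x) ∈ downArcs t → (x, i) ∈ A0)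
    (hsucc : ∀ y, (dfs t)[k + 2]? = some y → (i, y) ∈ downArcs t → (i, y) ∈ A0) :
    InIndex t A0 i (k + 1) := by
  have hw := List.eq_take_append_cons_drop hi
  refine ⟨hk, hi, hr, fun l c hl hic => ⟨fun hci => ?_, fun hic' => ?_⟩⟩ <;>
    have hlk : l ≠ k + 1 := by
      rintro rfl
      obtain rfl : c = i := Option.some_inj.1 (hl.symm.trans hi)
      exact not_mem_downArcs_swap hnd hic hic
  · by_contra hkl
    obtain ⟨y, hy, hiy, hyi⟩ := exists_head?_of_mem_suffix hnd hasc hw hic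
      (List.mem_drop_of_getElem? hl (by omega))
    rw [List.head?_drop] at hy
    exact hor.not_mem_swap hiy (hsucc y hy hiy) (hyi hci)
  · by_contra hkl
    obtain ⟨x, hx, hix, hxi⟩ := exists_getLast?_of_mem_prefix hnd hasc hw hic
      (List.mem_take_of_getElem? hl (by omega))
    have hklen : k < (dfs t).length := by rw [length_dfs]; omega
    replace hx : (dfs t)[k]? = some x := by simpa [List.getLast?_take, hklen] using hx
    exact hor.not_mem_swap hic hic' (hxi (hpred x hx hix))

theorem asc_of_consecutive (hnd : (verts t).Nodup) (hasc : AscFirst A0 t) {k : ℕ} {x y z : V}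
    (hx : (dfs t)[k]? = some x) (hy : (dfs t)[k + 1]? = some y) (hz : (dfs t)[k + 2]? = some z)
    (hyx : (y, x) ∈ downArcs t) (hyz : (y, z) ∈ downArcs t) (hzy : (z, y) ∈ A0) :
    (x, y) ∈ A0 :=
  asc_of_mem_prefix_of_mem_suffix hnd hasc (List.eq_take_append_cons_drop hy) hyx hyz
    (List.mem_take_of_getElem? hx (by omega)) (List.mem_drop_of_getElem? hz le_rfl) hzy

theorem cyc_congr {a b : ℕ} (h : a ≡ b [MOD cyclen t]) : cyc t a = cyc t b := by
  rw [cyc, cyc, h]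

theorem cyc_of_le {k : ℕ} (hk : k ≤ cyclen t) : cyc t k = (dfs t)[k]? := by
  rcases hk.lt_or_eq with hk | rfl
  · rw [cyc, Nat.mod_eq_of_lt hk]
  · rw [cyc, Nat.mod_self, getElem?_dfs_zero, getElem?_dfs_cyclen]

theorem exists_cyc_adj (hN : 0 < cyclen t) (q : ℕ) : ∃ x y, cyc t q = some x ∧
    cyc t (q + 1) = some y ∧ ((x, y) ∈ downArcs t ∨ (y, x) ∈ downArcs t) := by
  have hm : q % cyclen t < cyclen t := Nat.mod_lt q hN
  have hlen := length_dfs t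
  have hq1 : cyc t (q + 1) = (dfs t)[q % cyclen t + 1]? := by
    rw [cyc_congr ((Nat.mod_modEq q _).symm.add_right 1), cyc_of_le hm]
  refine ⟨_, _, List.getElem?_eq_getElem (by omega),
    hq1.trans (List.getElem?_eq_getElem (by omega)),
    List.isChain_iff_getElem.1 (isChain_dfs t) _ (by omega)⟩

theorem cyc_window (hN : 0 < cyclen t) {q : ℕ} {i : V} (hi : cyc t (q + 1) = some i)
    (hr : i ≠ root t) : ∃ k, (q + 1) % cyclen t = k + 1 ∧ k + 1 < cyclen t ∧
      (dfs t)[k + 1]? = some i ∧ cyc t q = (dfs t)[k]? ∧ cyc t (q + 2) = (dfs t)[k + 2]? := by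
  have hm : (q + 1) % cyclen t < cyclen t := Nat.mod_lt _ hN
  have hm0 : (q + 1) % cyclen t ≠ 0 := by
    intro h0
    rw [cyc, h0, getElem?_dfs_zero, Option.some_inj] at hi
    exact hr hi.symm
  obtain ⟨k, hk⟩ : ∃ k, (q + 1) % cyclen t = k + 1 := Nat.exists_eq_succ_of_ne_zero hm0
  rw [hk] at hm
  have hqk : q + 1 ≡ k + 1 [MOD cyclen t] := by rw [Nat.ModEq, hk, Nat.mod_eq_of_lt hm]
  refine ⟨k, hk, hm, by rw [← hk]; exact hi, ?_, ?_⟩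
  · rw [cyc_congr (Nat.ModEq.add_right_cancel' 1 hqk), cyc_of_le (by omega)]
  · rw [cyc_congr (hqk.add_right 1), cyc_of_le (by omega)]

theorem forwardAt_or_upBackAt_or_downBackAt (hN : 0 < cyclen t) (q : ℕ) :
    ForwardAt t A0 q ∨ UpBackAt t A0 q ∨ DownBackAt t A0 q := by
  obtain ⟨x, y, hx, hy, hxy | hyx⟩ := exists_cyc_adj hN q <;> by_cases hA : (x, y) ∈ A0
  · exact Or.inl ⟨x, y, hx, hy, hA⟩
  · exact Or.inr (Or.inr ⟨x, y, hx, hy, hxy, hA⟩)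
  · exact Or.inl ⟨x, y, hx, hy, hA⟩
  · exact Or.inr (Or.inl ⟨x, y, hx, hy, hyx, hA⟩)

theorem ForwardAt.not_upBackAt {q : ℕ} : ForwardAt t A0 q → ¬UpBackAt t A0 q := by
  rintro ⟨x, y, hx, hy, hA⟩ ⟨x', y', hx', hy', -, hA'⟩
  obtain rfl := Option.some_inj.1 (hx.symm.trans hx')
  obtain rfl := Option.some_inj.1 (hy.symm.trans hy')
  exact hA' hA

theorem ForwardAt.not_downBackAt {q : ℕ} : ForwardAt t A0 q → ¬DownBackAt t A0 q := by
  rintro ⟨x, y, hx, hy, hA⟩ ⟨x', y', hx', hy', -, hA'⟩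
  obtain rfl := Option.some_inj.1 (hx.symm.trans hx')
  obtain rfl := Option.some_inj.1 (hy.symm.trans hy')
  exact hA' hA

theorem UpBackAt.not_downBackAt (hnd : (verts t).Nodup) {q : ℕ} :
    UpBackAt t A0 q → ¬DownBackAt t A0 q := by
  rintro ⟨x, y, hx, hy, hyx, -⟩ ⟨x', y', hx', hy', hxy, -⟩
  obtain rfl := Option.some_inj.1 (hx.symm.trans hx')
  obtain rfl := Option.some_inj.1 (hy.symm.trans hy')
  exact not_mem_downArcs_swap hnd hyx hxy

theorem UpBackAt.not_downBackAt_succ (hN : 0 < cyclen t) (hnd : (verts t).Nodup)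
    (hasc : AscFirst A0 t) (hor : IsOrientation A0 t) {q : ℕ}
    (hr : cyc t (q + 1) ≠ some (root t)) : UpBackAt t A0 q → ¬DownBackAt t A0 (q + 1) := by
  rintro ⟨x, y, hx, hy, hyx, hxy⟩ ⟨y', z, hy', hz, hyz, hyzA⟩
  obtain rfl := Option.some_inj.1 (hy.symm.trans hy')
  obtain ⟨k, -, -, hky, hq, hq2⟩ := cyc_window hN hy fun h => hr (h ▸ hy)
  exact hxy (asc_of_consecutive hnd hasc (hq ▸ hx) hky (hq2 ▸ hz) hyx hyz
    (hor.mem_swap hyz hyzA))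

theorem InIndex.not_downBackAt (hor : IsOrientation A0 t) {i : V} {k : ℕ}
    (h : InIndex t A0 i k) : ¬DownBackAt t A0 k := by
  obtain ⟨hk, hik, -, hocc⟩ := h
  rintro ⟨x, y, hx, hy, hxy, hA⟩
  rw [cyc_of_le hk.le, hik, Option.some_inj] at hx
  subst hx
  rw [cyc_of_le hk] at hy
  have := (hocc (k + 1) y hy hxy).1 (hor.mem_swap hxy hA)
  omega

theorem InIndex.not_upBackAt (hN : 0 < cyclen t) (hor : IsOrientation A0 t) {i : V} {k q : ℕ}
    (h : InIndex t A0 i k) (hq : (q + 1) % cyclen t = k) : ¬UpBackAt t A0 q := by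
  obtain ⟨hk, hik, hr, hocc⟩ := h
  rintro ⟨x, y, hx, hy, hyx, hA⟩
  have hi : cyc t (q + 1) = some i := by rw [cyc, hq, hik]
  obtain rfl := Option.some_inj.1 (hy.symm.trans hi)
  obtain ⟨k', hk', -, -, hq', -⟩ := cyc_window hN hi hr
  have := (hocc k' x (hq' ▸ hx) hyx).2 (hor.mem_of_swap_not_mem hyx hA)
  omega

theorem inIndex_of_not_upBackAt_of_not_downBackAt (hN : 0 < cyclen t) (hnd : (verts t).Nodup)
    (hasc : AscFirst A0 t) (hor : IsOrientation A0 t) {q : ℕ} {i : V}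
    (hi : cyc t (q + 1) = some i) (hr : i ≠ root t) (hU : ¬UpBackAt t A0 q)
    (hD : ¬DownBackAt t A0 (q + 1)) : InIndex t A0 i ((q + 1) % cyclen t) := by
  obtain ⟨k, hqk, hkN, hik, hq, hq2⟩ := cyc_window hN hi hr
  rw [hqk]
  refine inIndex_of_asc_pred_of_desc_succ hnd hasc hor hkN hik hr (fun x hx hix => ?_)
    (fun y hy hiy => ?_) <;> by_contra hA
  · exact hU ⟨x, i, hq.trans hx, hi, hix, hA⟩
  · exact hD ⟨i, y, hi, hq2.trans hy, hiy, hA⟩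

end Walk

section TwoChildren

variable {A0 : Set (V × V)} {r : V} {t₁ t₂ : PTree V}

theorem root_arcs_agree (hnd : (verts (node r [t₁, t₂])).Nodup)
    (hroot : (r, root t₁) ∈ A0 ↔ (r, root t₂) ∈ A0) {x z : V}
    (hx : (r, x) ∈ downArcs (node r [t₁, t₂]))
    (hz : (r, z) ∈ downArcs (node r [t₁, t₂]))
    (h : (r, x) ∈ A0) : (r, z) ∈ A0 := by
  obtain ⟨c, hc, rfl⟩ := exists_eq_root_of_mem_downArcs_node hnd hx
  obtain ⟨c', hc', rfl⟩ := exists_eq_root_of_mem_downArcs_node hnd hz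
  simp only [List.mem_cons, List.not_mem_nil, or_false] at hc hc'
  rcases hc with rfl | rfl <;> rcases hc' with rfl | rfl <;> tauto

theorem upBackAt_or_downBackAt_succ_or_inIndex (hnd : (verts (node r [t₁, t₂])).Nodup)
    (hor : IsOrientation A0 (node r [t₁, t₂]))
    (hroot : (r, root t₁) ∈ A0 ↔ (r, root t₂) ∈ A0)
    (hasc : AscFirst A0 (node r [t₁, t₂])) (q : ℕ) :
    UpBackAt (node r [t₁, t₂]) A0 q ∨ DownBackAt (node r [t₁, t₂]) A0 (q + 1) ∨
      ∃ i, InIndex (node r [t₁, t₂]) A0 i ((q + 1) % cyclen (node r [t₁, t₂])) := by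
  have hN := cyclen_node_cons_pos r t₁ [t₂]
  rw [or_iff_not_imp_left, or_iff_not_imp_left]
  intro hU hD
  obtain ⟨x, i, hx, hi, hxi⟩ := exists_cyc_adj hN q
  by_cases hir : i = r
  · subst hir
    obtain ⟨i', y, hi', hy, hiy⟩ := exists_cyc_adj hN (q + 1)
    obtain rfl := Option.some_inj.1 (hi.symm.trans hi')
    have hix := hxi.resolve_left fun h => snd_ne_root_of_mem_downArcs hnd h rfl
    have hiy := hiy.resolve_right fun h => snd_ne_root_of_mem_downArcs hnd h rfl
    have hxA : (x, i) ∈ A0 := by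
      by_contra hA
      exact hU ⟨x, i, hx, hi, hix, hA⟩
    have hyA : (i, y) ∈ A0 := by
      by_contra hA
      exact hD ⟨i, y, hi, hy, hiy, hA⟩
    exact (hor.not_mem_swap hix (root_arcs_agree hnd hroot hiy hix hyA) hxA).elim
  · exact ⟨i, inIndex_of_not_upBackAt_of_not_downBackAt hN hnd hasc hor hi hir hU hD⟩

theorem not_downBackAt_succ_of_upBackAt (hnd : (verts (node r [t₁, t₂])).Nodup)
    (hor : IsOrientation A0 (node r [t₁, t₂]))
    (hroot : (r, root t₁) ∈ A0 ↔ (r, root t₂) ∈ A0)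
    (hasc : AscFirst A0 (node r [t₁, t₂])) {q : ℕ}
    (hU : UpBackAt (node r [t₁, t₂]) A0 q) :
    ¬DownBackAt (node r [t₁, t₂]) A0 (q + 1) := by
  by_cases hr : cyc (node r [t₁, t₂]) (q + 1) = some r
  · obtain ⟨x, y, -, hy, hyx, hxy⟩ := hU
    rintro ⟨y', z, hy', -, hyz, hyzA⟩
    obtain rfl := Option.some_inj.1 (hy.symm.trans hr)
    obtain rfl := Option.some_inj.1 (hy'.symm.trans hr)
    exact hyzA (root_arcs_agree hnd hroot hyx hyz (hor.mem_of_swap_not_mem hyx hxy))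
  · exact hU.not_downBackAt_succ (cyclen_node_cons_pos r t₁ [t₂]) hnd hasc hor hr

end TwoChildren

theorem exists_forward_between {F U D : ℕ → Prop} (htri : ∀ q, F q ∨ U q ∨ D q)
    (hFU : ∀ q, F q → ¬U q) (hFD : ∀ q, F q → ¬D q) (hUD : ∀ q, U q → ¬D q)
    (hUD' : ∀ q, U q → ¬D (q + 1)) {u w : ℕ} (huw : u < w) (hu : ¬D u) (hw : ¬U (w - 1))
    (hmid : ∀ l, u ≤ l → l + 1 < w → U l ∨ D (l + 1)) :
    ∃ p, u ≤ p ∧ p < w ∧ F p ∧ (∀ q, u ≤ q → q < p → U q) ∧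
      (∀ q, p < q → q < w → D q) ∧
      (∀ p', u ≤ p' → p' < w → F p' → p' = p) := by
  classical
  have hex : ∃ p, u ≤ p ∧ ¬U p := ⟨w - 1, by omega, hw⟩
  obtain ⟨hup, hpU⟩ := Nat.find_spec hex
  set p := Nat.find hex
  have hbefore : ∀ q, u ≤ q → q < p → U q := fun q huq hqp =>
    by_contra fun h => Nat.find_min hex hqp ⟨huq, h⟩
  have hpw : p < w := by
    have := Nat.find_min' hex ⟨show u ≤ w - 1 by omega, hw⟩
    omega
  have hpF : F p := by
    rcases htri p with h | h | h
    · exact h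
    · exact absurd h hpU
    · rcases hup.eq_or_lt with hup | hup
      · exact absurd (hup ▸ h) hu
      · refine absurd ?_ (hUD' (p - 1) (hbefore (p - 1) (by omega) (by omega)))
        rwa [Nat.sub_add_cancel (by omega)]
  have hafter : ∀ q, p < q → q < w → D q := by
    intro q hpq hqw
    induction q, hpq using Nat.le_induction with
    | base => exact (hmid p hup hqw).resolve_left hpU
    | succ q hpq ih => exact (hmid q (by omega) hqw).resolve_left fun hU => hUD q hU (ih (by omega))
  refine ⟨p, hup, hpw, hpF, hbefore, hafter, fun p' hup' hp'w hF => ?_⟩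
  rcases lt_trichotomy p' p with h | h | h
  · exact absurd (hbefore p' hup' h) (hFU p' hF)
  · exact h
  · exact absurd (hafter p' h hp'w) (hFD p' hF)

/-- **Interlacing of in-indices and forward steps.** For the cyclic DFS walk on the
plane rooted tree `T₀` (root with exactly two children whose edges are oriented the
same way, ascending children preceding descending ones): between two cyclically
consecutive in-indices `u` and `v` there is exactly one forward step; all steps before
it are upward-backward and all steps after it are downward-backward. -/
theorem in_indices_interlace_forward_steps (r : V) (t₁ t₂ : PTree V)
    (A0 : Set (V × V))
    (hnd : (verts (node r [t₁, t₂])).Nodup)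
    (hor : ∀ i j : V, (i, j) ∈ downArcs (node r [t₁, t₂]) →
      ((i, j) ∈ A0 ↔ (j, i) ∉ A0))
    (hroot : ((r, root t₁) ∈ A0 ↔ (r, root t₂) ∈ A0))
    (hasc : AscFirst A0 (node r [t₁, t₂])) :
    ∀ u v : ℕ, (∃ i, InIndex (node r [t₁, t₂]) A0 i u) →
      (∃ j, InIndex (node r [t₁, t₂]) A0 j v) → u ≠ v →
      (∀ l : ℕ, u < l → l < (if u < v then v else v + cyclen (node r [t₁, t₂])) →
        ¬ ∃ i, InIndex (node r [t₁, t₂]) A0 i (l % cyclen (node r [t₁, t₂]))) →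
      ∃ p, u ≤ p ∧ p < (if u < v then v else v + cyclen (node r [t₁, t₂])) ∧
        ForwardAt (node r [t₁, t₂]) A0 p ∧
        (∀ q, u ≤ q → q < p → UpBackAt (node r [t₁, t₂]) A0 q) ∧
        (∀ q, p < q → q < (if u < v then v else v + cyclen (node r [t₁, t₂])) →
          DownBackAt (node r [t₁, t₂]) A0 q) ∧
        (∀ p', u ≤ p' → p' < (if u < v then v else v + cyclen (node r [t₁, t₂])) →
          ForwardAt (node r [t₁, t₂]) A0 p' → p' = p) := by
  intro u v ⟨i, hu⟩ ⟨j, hv⟩ _ hno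
  have hN := cyclen_node_cons_pos r t₁ [t₂]
  have hvN := hv.1
  refine exists_forward_between (forwardAt_or_upBackAt_or_downBackAt hN)
    (fun _ => ForwardAt.not_upBackAt) (fun _ => ForwardAt.not_downBackAt)
    (fun _ => UpBackAt.not_downBackAt hnd)
    (fun _ => not_downBackAt_succ_of_upBackAt hnd hor hroot hasc) ?_ (hu.not_downBackAt hor)
    (hv.not_upBackAt hN hor ?_) fun l hul hlw => ?_
  · have := hu.1
    split_ifs <;> omega
  · split_ifs
    · rw [Nat.sub_add_cancel (by omega), Nat.mod_eq_of_lt hvN]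
    · rw [Nat.sub_add_cancel (by omega), Nat.add_mod_right, Nat.mod_eq_of_lt hvN]
  · rcases upBackAt_or_downBackAt_succ_or_inIndex hnd hor hroot hasc l with h | h | h
    · exact Or.inl h
    · exact Or.inr h
    · exact absurd h (hno (l + 1) (by omega) hlw)

end PTree
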